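/- arXiv:2103.00883 — 6 statements merged into one kernel-verified Lean document; each statement's English description precedes it below -/
import Mathlib

section
/- Let N, q be natural numbers with 2q < N. Let d, d̄ ∈ ℝ and let η_a, η_b : Fin N → ℝ be attack vectors whose supports each have cardinality at most q. If d + η_a(i) = d̄ + η_b(i) for every i ∈ Fin N, then d = d̄. (This is the sufficiency direction of Theorem 1: the true value d is reconstructible from the N sensor readings under q sensor attacks whenever q < N/2.) -/
/-- **Theorem 1 (sufficiency).** If `2 * q < N`, then the true value `d` is
reconstructible from the `N` sensor readings under `q` sensor attacks:
two explanations `d + ηa` and `d + ηb` with attack vectors supported on at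
most `q` sensors that produce the same readings must agree on the true value. -/
theorem reconstructible_of_two_mul_lt
    (N q : ℕ) (hq : 2 * q < N)
    (d d' : ℝ) (ηa ηb : Fin N → ℝ)
    (ha : (Finset.univ.filter fun i => ηa i ≠ 0).card ≤ q)
    (hb : (Finset.univ.filter fun i => ηb i ≠ 0).card ≤ q)
    (heq : ∀ i : Fin N, d + ηa i = d' + ηb i) :
    d = d' := by
  by_contra hne
  have hsub : (Finset.univ : Finset (Fin N)) ⊆
      (Finset.univ.filter fun i => ηa i ≠ 0) ∪ (Finset.univ.filter fun i => ηb i ≠ 0) := by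
    intro i _
    simp only [Finset.mem_union, Finset.mem_filter, Finset.mem_univ, true_and]
    by_contra h
    push_neg at h
    have := heq i
    rw [h.1, h.2] at this
    simp at this
    exact hne this
  have := Finset.card_le_card hsub
  have hcard := Finset.card_union_le (Finset.univ.filter fun i => ηa i ≠ 0)
      (Finset.univ.filter fun i => ηb i ≠ 0)
  simp only [Finset.card_univ, Fintype.card_fin] at this
  omega
end

section
/- Let N, q be natural numbers with N ≥ 1, q ≤ N and 2q ≥ N. Then there exist d, d̄ ∈ ℝ with d ≠ d̄ and attack vectors η_a, η_b : Fin N → ℝ, each with support of cardinality at most q, such that d + η_a(i) = d̄ + η_b(i) for every i ∈ Fin N. (This is the necessity direction of Theorem 1: if q ≥ N/2, the true value is not reconstructible under q sensor attacks.) -/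
lemma card_filter_val_lt (N q : ℕ) (h : q ≤ N) :
    (Finset.univ.filter fun i : Fin N => (i : ℕ) < q).card = q := by
  have : (Finset.univ.filter fun i : Fin N => (i : ℕ) < q) =
      (Finset.range q).attachFin
        (by intro m hm; exact lt_of_lt_of_le (Finset.mem_range.mp hm) h) := by
    ext i; simp
  rw [this, Finset.card_attachFin, Finset.card_range]

/-- **Theorem 1 (necessity).** If `N ≥ 1`, `q ≤ N` and `2 * q ≥ N`, then the
true value is not reconstructible under `q` sensor attacks: there exist two
distinct values and two admissible attack vectors (each supported on at most
`q` sensors) producing exactly the same reading vector. -/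
theorem not_reconstructible_of_two_mul_ge
    (N q : ℕ) (hN : 1 ≤ N) (hqN : q ≤ N) (hq : N ≤ 2 * q) :
    ∃ (d d' : ℝ) (ηa ηb : Fin N → ℝ),
      d ≠ d' ∧
      (Finset.univ.filter fun i => ηa i ≠ 0).card ≤ q ∧
      (Finset.univ.filter fun i => ηb i ≠ 0).card ≤ q ∧
      ∀ i : Fin N, d + ηa i = d' + ηb i := by
  refine ⟨0, 1, fun i => if (i : ℕ) < q then 1 else 0,
      fun i => if (i : ℕ) < q then 0 else -1, by norm_num, ?_, ?_, ?_⟩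
  · calc (Finset.univ.filter fun i : Fin N => (if (i : ℕ) < q then (1:ℝ) else 0) ≠ 0).card
        ≤ (Finset.univ.filter fun i : Fin N => (i : ℕ) < q).card := by
          apply Finset.card_le_card
          intro i hi
          simp only [Finset.mem_filter, Finset.mem_univ, true_and] at hi ⊢
          by_contra h
          simp [h] at hi
      _ = q := card_filter_val_lt N q hqN
  · have hsub : (Finset.univ.filter fun i : Fin N => (if (i : ℕ) < q then (0:ℝ) else -1) ≠ 0)
        ⊆ Finset.univ.filter fun i : Fin N => ¬ (i : ℕ) < q := by
      intro i hi
      simp only [Finset.mem_filter, Finset.mem_univ, true_and] at hi ⊢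
      by_contra h
      simp at h hi
      omega
    calc (Finset.univ.filter fun i : Fin N => (if (i : ℕ) < q then (0:ℝ) else -1) ≠ 0).card
        ≤ (Finset.univ.filter fun i : Fin N => ¬ (i : ℕ) < q).card :=
          Finset.card_le_card hsub
      _ = N - q := by
          have := Finset.card_filter_add_card_filter_not
            (s := (Finset.univ : Finset (Fin N))) (p := fun i : Fin N => (i : ℕ) < q)
          rw [card_filter_val_lt N q hqN] at this
          simp only [Finset.card_univ, Fintype.card_fin] at this
          omega
      _ ≤ q := by omega
  · intro i
    by_cases h : (i : ℕ) < q <;> simp [h]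
end

section
/- Let N, q be natural numbers with N ≥ 1 and q ≤ N. The following are equivalent: (i) for all d, d̄ ∈ ℝ and all attack vectors η_a, η_b : Fin N → ℝ with supports of cardinality at most q, the equality d + η_a(i) = d̄ + η_b(i) for all i ∈ Fin N implies d = d̄; (ii) 2q < N. (Theorem 1: d is reconstructible from N sensor readings under q attacks if and only if q < N/2.) -/
/-!
If `d ≠ d'`, every sensor must be attacked in at least one of the two scenarios, so the two
supports cover all `N` sensors and `N ≤ 2q`. Conversely, if `N ≤ 2q`, split the sensors into a
set `s` and its complement, both of size at most `q`: shifting the readings on `s` by `d' - d`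
in one scenario and on the complement by `d - d'` in the other produces identical readings from
two different true values.
-/

open Finset

section

variable {ι M : Type*} [Fintype ι] [DecidableEq M]

theorem card_le_card_support_add_card_support_of_ne [AddZeroClass M] {d d' : M} {ηa ηb : ι → M}
    (h : ∀ i, d + ηa i = d' + ηb i) (hne : d ≠ d') :
    Fintype.card ι ≤ #{i | ηa i ≠ 0} + #{i | ηb i ≠ 0} := by
  classical
  have hcover :
      (univ : Finset ι) ⊆ ({i | ηa i ≠ 0} : Finset ι) ∪ ({i | ηb i ≠ 0} : Finset ι) := by
    intro i _
    by_contra hi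
    simp only [mem_union, mem_filter, mem_univ, true_and, not_or, not_not] at hi
    exact hne (by simpa [hi.1, hi.2] using h i)
  exact (card_le_card hcover).trans (card_union_le _ _)

theorem exists_attacks_of_card_le_two_mul [AddGroup M] (d d' : M) {q : ℕ}
    (hq : Fintype.card ι ≤ 2 * q) :
    ∃ ηa ηb : ι → M, #{i | ηa i ≠ 0} ≤ q ∧ #{i | ηb i ≠ 0} ≤ q ∧
      ∀ i, d + ηa i = d' + ηb i := by
  classical
  obtain ⟨s, -, hs⟩ := exists_subset_card_eq (s := (univ : Finset ι)) (min_le_right q _)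
  refine ⟨fun i => if i ∈ s then -d + d' else 0, fun i => if i ∈ s then 0 else -d' + d,
    ?_, ?_, fun i => ?_⟩
  · refine (card_le_card fun i hi => ?_).trans (hs.trans_le (min_le_left _ _))
    by_contra his
    simp [his] at hi
  · calc #{i | (if i ∈ s then 0 else -d' + d) ≠ 0}
        ≤ #sᶜ := card_le_card fun i hi => by
          rw [mem_compl]
          intro his
          simp [his] at hi
      _ ≤ q := by rw [card_compl, hs, card_univ]; omega
  · dsimp only
    split_ifs <;> simp only [add_zero, ← add_assoc, add_neg_cancel, zero_add]

end

theorem reconstructible_iff_two_mul_lt_general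
    (N q : ℕ) :
    (∀ (d d' : ℝ) (ηa ηb : Fin N → ℝ),
        (Finset.univ.filter fun i => ηa i ≠ 0).card ≤ q →
        (Finset.univ.filter fun i => ηb i ≠ 0).card ≤ q →
        (∀ i : Fin N, d + ηa i = d' + ηb i) →
        d = d') ↔ 2 * q < N := by
  constructor
  · intro hrec
    by_contra! hN
    obtain ⟨ηa, ηb, ha, hb, h⟩ :=
      exists_attacks_of_card_le_two_mul (ι := Fin N) (0 : ℝ) 1 (by simpa using hN)
    exact zero_ne_one (hrec 0 1 ηa ηb ha hb h)
  · intro hN d d' ηa ηb ha hb h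
    by_contra hne
    have := card_le_card_support_add_card_support_of_ne h hne
    rw [Fintype.card_fin] at this
    omega

/-- **Theorem 1.** The true value `d` is reconstructible from the `N` sensor
readings under `q` sensor attacks if and only if `q < N / 2`, i.e. `2 * q < N`. -/
theorem reconstructible_iff_two_mul_lt
    (N q : ℕ) (hN : 1 ≤ N) (hqN : q ≤ N) :
    (∀ (d d' : ℝ) (ηa ηb : Fin N → ℝ),
        (Finset.univ.filter fun i => ηa i ≠ 0).card ≤ q →
        (Finset.univ.filter fun i => ηb i ≠ 0).card ≤ q →
        (∀ i : Fin N, d + ηa i = d' + ηb i) →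
        d = d') ↔ 2 * q < N :=
  reconstructible_iff_two_mul_lt_general N q
end

section
/- Let N, q be natural numbers with 2q < N. Let d ∈ ℝ and D, ν, η : Fin N → ℝ with D(i) = d + ν(i) + η(i) for all i. Suppose B ≥ 0 satisfies |ν(i)| ≤ B for all i, and suppose supp(η) ⊆ W for some W ⊆ Fin N with card(W) ≤ q. Let σ ⊆ Fin N be any subset with card(σ) = N − q that minimizes π_J over all subsets J ⊆ Fin N with card(J) = N − q, where π_J := max_{i∈J} |d̂_J − D(i)| and d̂_J is the mean of D over J. Then the fused measurement error e := d̂_σ − d satisfies |e| ≤ 3B. (Theorem 2: the fusion algorithm's error is bounded by three times the noise bound, independently of the attack signals.) -/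
/-!
Proof idea: some `N - q` sensors are unattacked, and their readings lie within `B` of `d`, so
their mean does too and every member deviates from it by at most `2B`. Hence the minimizer `σ`
has `π_σ ≤ 2B`. Since `N - q > q`, `σ` contains an unattacked sensor `j`, and
`|d̂_σ - d| ≤ |d̂_σ - D j| + |D j - d| ≤ 2B + B`.
-/

/-- The arithmetic mean of the readings over a subset of sensors. -/
noncomputable def dhat {N : ℕ} (D : Fin N → ℝ) (J : Finset (Fin N)) : ℝ :=
  (∑ i ∈ J, D i) / (J.card : ℝ)

/-- `π_J = max_{i ∈ J} |d̂_J - D i|`: the largest deviation of a member reading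
from the subset average (expressed as a supremum over the image set, which for
a nonempty finite subset coincides with the maximum). -/
noncomputable def piDev {N : ℕ} (D : Fin N → ℝ) (J : Finset (Fin N)) : ℝ :=
  sSup ((fun i => |dhat D J - D i|) '' (J : Set (Fin N)))

open Finset

section
variable {N : ℕ} (D : Fin N → ℝ) {J : Finset (Fin N)}

theorem abs_dhat_sub_le_piDev {i : Fin N} (hi : i ∈ J) : |dhat D J - D i| ≤ piDev D J :=
  le_csSup ((J.finite_toSet.image _).bddAbove) ⟨i, hi, rfl⟩

variable {D}

theorem piDev_le_of_forall_le {c : ℝ} (hJ : J.Nonempty) (h : ∀ i ∈ J, |dhat D J - D i| ≤ c) :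
    piDev D J ≤ c :=
  csSup_le ((coe_nonempty.mpr hJ).image _) (by rintro _ ⟨i, hi, rfl⟩; exact h i hi)

theorem abs_dhat_sub_le {d B : ℝ} (hJ : J.Nonempty) (h : ∀ i ∈ J, |D i - d| ≤ B) :
    |dhat D J - d| ≤ B := by
  have hcard : (0 : ℝ) < #J := by exact_mod_cast hJ.card_pos
  rw [dhat, div_sub' hcard.ne', abs_div, abs_of_pos hcard, div_le_iff₀ hcard]
  calc |∑ i ∈ J, D i - #J * d| = |∑ i ∈ J, (D i - d)| := by
        rw [sum_sub_distrib, sum_const, nsmul_eq_mul]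
    _ ≤ ∑ i ∈ J, |D i - d| := abs_sum_le_sum_abs _ _
    _ ≤ ∑ _i ∈ J, B := sum_le_sum h
    _ = B * #J := by rw [sum_const, nsmul_eq_mul, mul_comm]

theorem piDev_le_two_mul {d B : ℝ} (hJ : J.Nonempty) (h : ∀ i ∈ J, |D i - d| ≤ B) :
    piDev D J ≤ 2 * B := by
  refine piDev_le_of_forall_le hJ fun i hi => ?_
  calc |dhat D J - D i| ≤ |dhat D J - d| + |d - D i| := abs_sub_le ..
    _ ≤ 2 * B := by linarith [abs_dhat_sub_le hJ h, h i hi, abs_sub_comm d (D i)]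

end

theorem fusion_error_le_three_noise_general
    (N q : ℕ) (hq : 2 * q < N)
    (d : ℝ) (D ν η : Fin N → ℝ)
    (hD : ∀ i : Fin N, D i = d + ν i + η i)
    (B : ℝ) (hν : ∀ i : Fin N, |ν i| ≤ B)
    (W : Finset (Fin N)) (hW : W.card ≤ q)
    (hsupp : ∀ i : Fin N, η i ≠ 0 → i ∈ W)
    (σ : Finset (Fin N)) (hσcard : σ.card = N - q)
    (hmin : ∀ J : Finset (Fin N), J.card = N - q → piDev D σ ≤ piDev D J) :
    |dhat D σ - d| ≤ 3 * B := by
  have hclean : ∀ i ∉ W, |D i - d| ≤ B := fun i hi => by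
    rw [hD i, not_imp_comm.mp (hsupp i) hi]
    simpa using hν i
  obtain ⟨J, hJW, hJcard⟩ : ∃ J ⊆ Wᶜ, #J = N - q :=
    exists_subset_card_eq (by rw [card_compl, Fintype.card_fin]; omega)
  have hJ : J.Nonempty := card_pos.mp (by omega)
  have hσ : piDev D σ ≤ 2 * B :=
    (hmin J hJcard).trans (piDev_le_two_mul hJ fun i hi => hclean i (mem_compl.mp (hJW hi)))
  obtain ⟨j, hjσ, hjW⟩ := exists_mem_notMem_of_card_lt_card (s := W) (t := σ) (by omega)
  calc |dhat D σ - d| ≤ |dhat D σ - D j| + |D j - d| := abs_sub_le ..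
    _ ≤ 3 * B := by linarith [abs_dhat_sub_le_piDev D hjσ, hclean j hjW]

/-- **Theorem 2.** Under at most `q < N / 2` attacked sensors, the fusion
algorithm — which selects a subset `σ` of cardinality `N - q` minimizing `π_J`
and outputs `d̂_σ` — has fused measurement error `e = d̂_σ - d` bounded by
three times the noise bound `B`, independently of the attack signals. -/
theorem fusion_error_le_three_noise
    (N q : ℕ) (hq : 2 * q < N)
    (d : ℝ) (D ν η : Fin N → ℝ)
    (hD : ∀ i : Fin N, D i = d + ν i + η i)
    (B : ℝ) (hB : 0 ≤ B) (hν : ∀ i : Fin N, |ν i| ≤ B)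
    (W : Finset (Fin N)) (hW : W.card ≤ q)
    (hsupp : ∀ i : Fin N, η i ≠ 0 → i ∈ W)
    (σ : Finset (Fin N)) (hσcard : σ.card = N - q)
    (hmin : ∀ J : Finset (Fin N), J.card = N - q → piDev D σ ≤ piDev D J) :
    |dhat D σ - d| ≤ 3 * B :=
  fusion_error_le_three_noise_general N q hq d D ν η hD B hν W hW hsupp σ hσcard hmin
end

section
/- Let N ≥ 1 be a natural number, d ∈ ℝ, and let D, ν, η : Fin N → ℝ with D(i) = d + ν(i) + η(i) for all i. Suppose B ≥ 0 satisfies |ν(j)| ≤ B for all j, and B_i ≥ 0 satisfies |ν(i)| ≤ B_i for some fixed index i. If |(∑_{j=1}^{N} D(j))/N − D(i)| > B + B_i, then η ≠ 0, i.e., at least one sensor is under attack. (Correctness of the attack detection rule: exceeding the detection threshold implies an attack is present.) -/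
/-- **Correctness of the attack detection rule.** If some sensor's reading
deviates from the average of all `N` readings by more than the detection
threshold `τ_{d,i} = B + B_i`, then an attack is present, i.e. `η ≠ 0`. -/
theorem detection_implies_attack
    (N : ℕ) (hN : 1 ≤ N) (d : ℝ) (D ν η : Fin N → ℝ)
    (hD : ∀ i : Fin N, D i = d + ν i + η i)
    (B : ℝ) (hB : 0 ≤ B) (hν : ∀ j : Fin N, |ν j| ≤ B)
    (i : Fin N) (Bi : ℝ) (hBi : 0 ≤ Bi) (hνi : |ν i| ≤ Bi)
    (hdet : B + Bi < |(∑ j : Fin N, D j) / (N : ℝ) - D i|) :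
    η ≠ 0 := by
  intro hη
  have hNpos : (0:ℝ) < (N:ℝ) := by exact_mod_cast hN
  have hsum : (∑ j : Fin N, D j) = (N:ℝ) * d + ∑ j : Fin N, ν j := by
    simp only [hD, hη, Pi.zero_apply, add_zero, Finset.sum_add_distrib,
      Finset.sum_const, Finset.card_univ, Fintype.card_fin, nsmul_eq_mul]
  have hDi : D i = d + ν i := by simp [hD i, hη]
  have key : (∑ j : Fin N, D j) / (N : ℝ) - D i = (∑ j : Fin N, ν j) / (N:ℝ) - ν i := by
    rw [hsum, hDi]; field_simp; ring
  have h1 : |(∑ j : Fin N, ν j) / (N:ℝ)| ≤ B := by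
    rw [abs_div, abs_of_pos hNpos, div_le_iff₀ hNpos]
    calc |∑ j : Fin N, ν j| ≤ ∑ j : Fin N, |ν j| := Finset.abs_sum_le_sum_abs _ _
      _ ≤ ∑ _j : Fin N, B := Finset.sum_le_sum fun j _ => hν j
      _ = B * N := by simp [mul_comm]
  have : |(∑ j : Fin N, D j) / (N : ℝ) - D i| ≤ B + Bi := by
    rw [key]
    exact (abs_sub _ _).trans (add_le_add h1 hνi)
  linarith
end

section
/- Let N be a natural number, d ∈ ℝ, and let D, ν, η : Fin N → ℝ with D(j) = d + ν(j) + η(j) for all j. Fix an index i* ∈ Fin N with η(i*) = 0, and suppose |ν(j)| ≤ B_j for all j. Define the isolated set Ŵ := { i ∈ Fin N : |D(i*) − D(i)| > B_{i*} + B_i }. Then Ŵ ⊆ supp(η); that is, every sensor isolated by the algorithm is genuinely attacked (η(i) ≠ 0 for each i ∈ Ŵ). -/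
/-- **Correctness of the isolation rule.** Comparing each sensor against an
attack-free reference sensor `i*` with threshold `τ_i = B_{i*} + B_i`, every
sensor isolated by the algorithm is genuinely attacked:
`Ŵ = { i : |D(i*) - D(i)| > B_{i*} + B_i } ⊆ supp(η)`. -/
theorem isolated_subset_support
    (N : ℕ) (d : ℝ) (D ν η : Fin N → ℝ)
    (hD : ∀ j : Fin N, D j = d + ν j + η j)
    (istar : Fin N) (histar : η istar = 0)
    (Bnd : Fin N → ℝ) (hν : ∀ j : Fin N, |ν j| ≤ Bnd j) :
    {i : Fin N | Bnd istar + Bnd i < |D istar - D i|} ⊆ Function.support η := by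
  intro i hi
  simp only [Set.mem_setOf_eq] at hi
  intro h0
  have heq : D istar - D i = ν istar - ν i := by
    rw [hD, hD, histar, h0]; ring
  rw [heq] at hi
  have h1 : |ν istar - ν i| ≤ |ν istar| + |ν i| := by
    rw [sub_eq_add_neg]
    calc |ν istar + -ν i| ≤ |ν istar| + |-ν i| := abs_add_le _ _
    _ = |ν istar| + |ν i| := by rw [abs_neg]
  linarith [hν istar, hν i]
end
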